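/- arXiv:2109.13215 — 2 statements merged into one kernel-verified Lean document; each statement's English description precedes it below -/
import Mathlib

section
/- Let f̂(x) = (2a − √2·b)/(2√2) + (b/2)·sin((N_A + 1/2)nπx)/sin(nπx/2) with a, b > 0. If 0.2172·√2·b·(B − 1 + n) > n·(2a − √2·b), then there exists x ∈ [1/h(B,n), 2/h(B,n)] with f̂(x) < 0; that is, the first negative lobe of the Dirichlet kernel induces a misclassification region for f̂. -/
/-- `h(B,n) = (B - 1 + n) / 2`. -/
noncomputable def hBn (n B : ℕ) : ℝ := ((B : ℝ) - 1 + (n : ℝ)) / 2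

/-- The learned function in Dirichlet-kernel form:
`f̂(x) = (2a - √2 b)/(2√2) + (b/2) · sin ((N_A + 1/2) n π x) / sin (n π x / 2)`,
where `N_A = (B - 1)/(2n)`. -/
noncomputable def fhatD (n B : ℕ) (a b : ℝ) (x : ℝ) : ℝ :=
  (2 * a - Real.sqrt 2 * b) / (2 * Real.sqrt 2) +
    (b / 2) * Real.sin (((((B : ℝ) - 1) / (2 * (n : ℝ))) + 1 / 2) * (n : ℝ) * Real.pi * x) /
      Real.sin ((n : ℝ) * Real.pi * x / 2)

/-- Numeric fact: `sin (9/2) ≤ -0.9774`, i.e. `9/2` lies deep in the first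
negative lobe of the sine. -/
lemma sin_nine_halves_le : Real.sin (9/2) ≤ -0.9774 := by
  have hpi1 := Real.pi_gt_d6
  have hpi2 := Real.pi_lt_d6
  have h1 : Real.sin (9/2) = -Real.sin (9/2 - Real.pi) := by
    rw [Real.sin_sub_pi]; ring
  have h2 : Real.sin (9/2 - Real.pi) = Real.cos (3*Real.pi/2 - 9/2) := by
    rw [← Real.cos_pi_div_two_sub]; ring_nf
  have hc : (0:ℝ) < 3*Real.pi/2 - 9/2 := by nlinarith
  have hc2 : 3*Real.pi/2 - 9/2 ≤ 0.2124 := by nlinarith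
  have := Real.one_sub_sq_div_two_le_cos (x := 3*Real.pi/2 - 9/2)
  rw [h1, h2]
  nlinarith [sq_nonneg (3*Real.pi/2 - 9/2)]

set_option maxHeartbeats 800000 in
/-- **The first negative lobe induces a misclassification region.**  If
`0.2172 √2 b (B - 1 + n) > n (2a - √2 b)`, then there exists
`x ∈ [1/h(B,n), 2/h(B,n)]` with `f̂(x) < 0`. -/
theorem stmt_2 (n B : ℕ) (hn : 0 < n) (hB : 1 < B) (hdvd : 2 * n ∣ B - 1)
    (a b : ℝ) (ha : 0 < a) (hb : 0 < b)
    (hcond : 0.2172 * Real.sqrt 2 * b * ((B : ℝ) - 1 + (n : ℝ)) >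
      (n : ℝ) * (2 * a - Real.sqrt 2 * b)) :
    ∃ x ∈ Set.Icc (1 / hBn n B) (2 / hBn n B), fhatD n B a b x < 0 := by
  have hpi := Real.pi_pos
  have hpi1 := Real.pi_gt_d6
  have hpi2 := Real.pi_lt_d6
  have hn' : (0:ℝ) < n := by exact_mod_cast hn
  have hBge : 2 * n ≤ B - 1 := Nat.le_of_dvd (by omega) hdvd
  have hBge' : 2 * (n:ℝ) ≤ (B:ℝ) - 1 := by
    have : ((2*n : ℕ) : ℝ) ≤ ((B - 1 : ℕ) : ℝ) := by exact_mod_cast hBge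
    rwa [Nat.cast_mul, Nat.cast_sub (by omega), Nat.cast_ofNat, Nat.cast_one] at this
  set h : ℝ := hBn n B with hh
  have hhval : h = ((B:ℝ) - 1 + n) / 2 := rfl
  have hh3 : 3 * (n:ℝ) / 2 ≤ h := by rw [hhval]; linarith
  have hpos : 0 < h := by linarith [hn']
  refine ⟨9 / (2 * h * Real.pi), ⟨?_, ?_⟩, ?_⟩
  · rw [div_le_div_iff₀ hpos (by positivity)]; nlinarith
  · rw [div_le_div_iff₀ (by positivity) hpos]; nlinarith
  -- main inequality
  have hxne : (2 * h * Real.pi) ≠ 0 := by positivity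
  have hcoef : ((((B : ℝ) - 1) / (2 * (n : ℝ))) + 1 / 2) * (n : ℝ) = h := by
    rw [hhval]; field_simp
  have hA1 : ((((B : ℝ) - 1) / (2 * (n : ℝ))) + 1 / 2) * (n : ℝ) * Real.pi *
      (9 / (2 * h * Real.pi)) = 9/2 := by
    rw [hcoef]; field_simp
  have hA2 : (n : ℝ) * Real.pi * (9 / (2 * h * Real.pi)) / 2 = 9 * n / (4 * h) := by
    field_simp; ring
  set t : ℝ := 9 * (n:ℝ) / (4 * h) with ht
  have htpos : 0 < t := by positivity
  have htle : t ≤ 3/2 := by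
    rw [ht, div_le_iff₀ (by positivity)]; nlinarith
  have hDpos : 0 < Real.sin t := Real.sin_pos_of_pos_of_lt_pi htpos (by nlinarith)
  have hDle : Real.sin t ≤ t := Real.sin_le htpos.le
  rw [fhatD, hA1, hA2]
  -- bound on constant term
  have hs2 : (0:ℝ) < Real.sqrt 2 := by positivity
  have hs2sq : Real.sqrt 2 * Real.sqrt 2 = 2 := Real.mul_self_sqrt (by norm_num)
  have hC : (2 * a - Real.sqrt 2 * b) / (2 * Real.sqrt 2) < 0.2172 * b * h / n := by
    rw [div_lt_div_iff₀ (by positivity) hn']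
    rw [hhval] at *
    nlinarith [hcond, hs2sq, hs2]
  -- bound on kernel term
  have hS := sin_nine_halves_le
  have hK : b / 2 * Real.sin (9/2) / Real.sin t ≤ -(0.2172 * b * h / n) := by
    rw [div_le_iff₀ hDpos]
    have h1 : b / 2 * Real.sin (9/2) ≤ b / 2 * (-0.9774) :=
      mul_le_mul_of_nonneg_left hS (by positivity)
    have hcpos : (0:ℝ) ≤ 0.2172 * b * h / n := by positivity
    have h2 : (0.2172 * b * h / n) * Real.sin t ≤ (0.2172 * b * h / n) * t :=
      mul_le_mul_of_nonneg_left hDle hcpos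
    have h3 : (0.2172 * b * h / n) * t = 0.4887 * b := by
      rw [ht]; field_simp; ring
    nlinarith [h1, h2, h3]
  linarith
end

section
/- Depth of the first negative lobe of the Dirichlet kernel: for every integer N ≥ 1 there exists x ∈ (0, 2/(N + 1/2)] such that sin((N + 1/2)πx) / sin(πx/2) ≤ −0.4344·(N + 1/2). In particular, the global minimum of the Dirichlet kernel D_N over one period is at most −0.4344·(N + 1/2). -/
lemma sin_44934_le : Real.sin 4.4934 ≤ -0.97597 := by
  have h1 : Real.sin 4.4934 = -Real.cos (3 * Real.pi / 2 - 4.4934) := by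
    rw [Real.cos_sub]
    have : Real.cos (3 * Real.pi / 2) = 0 := by
      rw [show (3:ℝ) * Real.pi / 2 = Real.pi + Real.pi/2 by ring, Real.cos_add]
      simp
    have h2 : Real.sin (3 * Real.pi / 2) = -1 := by
      rw [show (3:ℝ) * Real.pi / 2 = Real.pi + Real.pi/2 by ring, Real.sin_add]
      simp
    rw [this, h2]; ring
  rw [h1]
  have hu : |3 * Real.pi / 2 - 4.4934| ≤ 0.21899 := by
    rw [abs_le]
    constructor <;> nlinarith [Real.pi_gt_d6, Real.pi_lt_d6]
  have := Real.one_sub_sq_div_two_le_cos (x := 3 * Real.pi / 2 - 4.4934)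
  nlinarith [sq_abs (3 * Real.pi / 2 - 4.4934), abs_nonneg (3 * Real.pi / 2 - 4.4934),
    sq_nonneg (|3 * Real.pi / 2 - 4.4934| - 0.21899)]

/-- **Depth of the first negative lobe of the Dirichlet kernel.** For every integer `N ≥ 1`
there exists `x ∈ (0, 2/(N + 1/2)]` such that
`sin ((N + 1/2) π x) / sin (π x / 2) ≤ -0.4344 * (N + 1/2)`.  In particular the global
minimum of the Dirichlet kernel `D_N` over one period is at most `-0.4344 * (N + 1/2)`. -/
theorem stmt_14 (N : ℕ) (hN : 1 ≤ N) :
    ∃ x ∈ Set.Ioc (0 : ℝ) (2 / ((N : ℝ) + 1 / 2)),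
      Real.sin (((N : ℝ) + 1 / 2) * Real.pi * x) / Real.sin (Real.pi * x / 2) ≤
        -0.4344 * ((N : ℝ) + 1 / 2) := by
  set M : ℝ := (N : ℝ) + 1 / 2 with hM
  have hM32 : (3:ℝ)/2 ≤ M := by
    have : (1:ℝ) ≤ (N:ℝ) := by exact_mod_cast hN
    rw [hM]; linarith
  have hMpos : 0 < M := lt_of_lt_of_le (by norm_num) hM32
  have hpi := Real.pi_pos
  have hpigt := Real.pi_gt_d6
  refine ⟨4.4934 / (M * Real.pi), ⟨by positivity, ?_⟩, ?_⟩
  · rw [div_le_div_iff₀ (by positivity) hMpos]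
    nlinarith
  · have harg : M * Real.pi * (4.4934 / (M * Real.pi)) = 4.4934 := by
      field_simp
    have hy : Real.pi * (4.4934 / (M * Real.pi)) / 2 = 4.4934 / (2 * M) := by
      field_simp
    rw [harg, hy]
    set y : ℝ := 4.4934 / (2 * M) with hydef
    have hy0 : 0 < y := by positivity
    have hylt : y < Real.pi := by
      rw [hydef, div_lt_iff₀ (by positivity)]
      nlinarith
    have hsy0 : 0 < Real.sin y := Real.sin_pos_of_pos_of_lt_pi hy0 hylt
    have hsyle : Real.sin y ≤ y := (Real.sin_lt hy0).le
    have hsneg : Real.sin 4.4934 ≤ -0.97597 := sin_44934_le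
    have step1 : Real.sin 4.4934 / Real.sin y ≤ Real.sin 4.4934 / y := by
      rw [div_le_div_iff₀ hsy0 hy0]
      nlinarith
    have step2 : Real.sin 4.4934 / y ≤ -0.4344 * M := by
      rw [hydef, div_div_eq_mul_div, div_le_iff₀ (by positivity)]
      nlinarith
    linarith
end
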